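/- arXiv:2107.05886 — 4 statements merged into one kernel-verified Lean document; each statement's English description precedes it below -/
import Mathlib

section
/- Let m ≥ 3 be odd and let 0 < s < r be integers. Define the alternating threshold function f : {0,1}^m → {0,1} by f(x_1,...,x_m) = 1 if ∑_{i=1}^m (-1)^{i-1} x_i > 0 and f(x_1,...,x_m) = 0 otherwise. Then for any m × r matrix over {0,1} whose rows each contain exactly s ones, the r-tuple obtained by applying f to each column contains both a 0 and a 1. -/
/-!
Summing the alternating sums of all columns gives the alternating sum of the row weights,
`s * (1 - 1 + ⋯ + 1) = s` since `m` is odd. As `0 < s`, some column has a positive alternating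
sum; as `s < r`, the `r` integer column sums cannot all be `≥ 1`.
-/

/-- The alternating threshold function: `f(x_1,…,x_m) = 1` iff
`∑_{i=1}^m (-1)^(i-1) x_i > 0` (here indices `i : Fin m` are 0-based, so the
sign of position `i` is `(-1)^i`). -/
def altThreshold (m : ℕ) (x : Fin m → Bool) : Bool :=
  decide (0 < ∑ i : Fin m, (-1 : ℤ) ^ (i : ℕ) * (if x i then 1 else 0))

open Finset

def altSum (m : ℕ) (x : Fin m → Bool) : ℤ :=
  ∑ i : Fin m, (-1 : ℤ) ^ (i : ℕ) * (if x i then 1 else 0)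

lemma altThreshold_eq_decide (m : ℕ) (x : Fin m → Bool) :
    altThreshold m x = decide (0 < altSum m x) :=
  rfl

lemma sum_fin_neg_one_pow_of_odd {m : ℕ} (hm : Odd m) :
    ∑ i : Fin m, (-1 : ℤ) ^ (i : ℕ) = 1 := by
  rw [Fin.sum_univ_eq_sum_range, neg_one_geom_sum, if_neg (Nat.not_even_iff_odd.mpr hm)]

lemma sum_altSum_columns {m r : ℕ} (t : Fin m → Fin r → Bool) :
    ∑ j, altSum m (fun i => t i j) =
      ∑ i : Fin m, (-1 : ℤ) ^ (i : ℕ) * (univ.filter fun j => t i j = true).card := by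
  unfold altSum
  rw [sum_comm]
  simp_rw [← mul_sum, sum_boole]

lemma sum_altSum_columns_of_card_rows_eq {m r s : ℕ} (hodd : Odd m) (t : Fin m → Fin r → Bool)
    (hs : ∀ i : Fin m, (univ.filter fun j => t i j = true).card = s) :
    ∑ j, altSum m (fun i => t i j) = s := by
  simp_rw [sum_altSum_columns, hs, ← sum_mul, sum_fin_neg_one_pow_of_odd hodd, one_mul]

theorem altThreshold_polymorphism_general (m r s : ℕ) (hodd : Odd m)
    (h0s : 0 < s) (hsr : s < r) (t : Fin m → Fin r → Bool)
    (hs : ∀ i : Fin m, (Finset.univ.filter fun j => t i j = true).card = s) :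
    (∃ j : Fin r, altThreshold m (fun i => t i j) = true) ∧
    (∃ j : Fin r, altThreshold m (fun i => t i j) = false) := by
  have htotal := sum_altSum_columns_of_card_rows_eq hodd t hs
  simp only [altThreshold_eq_decide, decide_eq_true_iff, decide_eq_false_iff_not]
  constructor
  · obtain ⟨j, -, hj⟩ := exists_lt_of_sum_lt (s := univ) (f := fun _ => (0 : ℤ))
      (by rw [htotal, sum_const_zero]; exact_mod_cast h0s)
    exact ⟨j, hj⟩
  · obtain ⟨j, -, hj⟩ := exists_lt_of_sum_lt (s := univ) (g := fun _ => (1 : ℤ))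
      (by rw [htotal]; simpa using hsr)
    exact ⟨j, by omega⟩

/-- For odd `m ≥ 3` and `0 < s < r`, applying the alternating threshold
function columnwise to an `m × r` Boolean matrix whose rows each contain
exactly `s` ones yields a tuple containing both a `0` and a `1`. -/
theorem altThreshold_polymorphism (m r s : ℕ) (hm : 3 ≤ m) (hodd : Odd m)
    (h0s : 0 < s) (hsr : s < r) (t : Fin m → Fin r → Bool)
    (hs : ∀ i : Fin m, (Finset.univ.filter fun j => t i j = true).card = s) :
    (∃ j : Fin r, altThreshold m (fun i => t i j) = true) ∧
    (∃ j : Fin r, altThreshold m (fun i => t i j) = false) :=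
  altThreshold_polymorphism_general m r s hodd h0s hsr t hs
end

section
/- Let G be a graph with n vertices containing an odd cycle a_0, a_1, ..., a_N = a_0 (N odd). Then there is no 3-strategy on G and K_2; that is, there is no nonempty family H of partial homomorphisms from G to K_2 with domains of size at most 3 that is closed under restriction and has the extension property up to 3. -/
/-!
Propagate a colour along the cycle. A strategy containing a map that colours `a 0` with `c`
and `a i` with `c + i` can be restricted to these two vertices and, as `2 < 3`, extended to
`a (i + 1)`; in `K_2` the only colour left for `a (i + 1)` is `c + i + 1`. After `N` steps,
`a N = a 0` receives both `c` and `c + N`, so `N` is even.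
-/

/-- `H` is a `k`-strategy on the graph `G` and the complete graph `K_q`:
a nonempty family of partial homomorphisms (partial proper `q`-colorings,
encoded as maps `V → Option (Fin q)`) with domains of size at most `k`,
closed under restrictions, and with the extension property up to `k`. -/
def IsStrategy {V : Type*} (G : SimpleGraph V) (q k : ℕ)
    (H : Set (V → Option (Fin q))) : Prop :=
  H.Nonempty ∧
  (∀ h ∈ H, ∀ u v : V, G.Adj u v →
    ∀ a b : Fin q, h u = some a → h v = some b → a ≠ b) ∧
  (∀ h ∈ H, {v | h v ≠ none}.Finite ∧ {v | h v ≠ none}.ncard ≤ k) ∧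
  (∀ h ∈ H, ∀ h' : V → Option (Fin q),
    (∀ v, h' v = h v ∨ h' v = none) → h' ∈ H) ∧
  (∀ h ∈ H, {v | h v ≠ none}.ncard < k → ∀ x, h x = none →
    ∃ h' ∈ H, (∀ v, v ≠ x → h' v = h v) ∧ h' x ≠ none)

theorem Fin.two_eq_add_one_of_ne {a b : Fin 2} (hab : a ≠ b) : b = a + 1 := by
  revert a b; decide

namespace IsStrategy

variable {V : Type*} {G : SimpleGraph V} {q k : ℕ} {H : Set (V → Option (Fin q))}
  {h : V → Option (Fin q)}

theorem ne_of_adj (hH : IsStrategy G q k H) (hh : h ∈ H) {u v : V} (huv : G.Adj u v)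
    {a b : Fin q} (hu : h u = some a) (hv : h v = some b) : a ≠ b :=
  hH.2.1 h hh u v huv a b hu hv

theorem exists_extend_of_card_lt (hH : IsStrategy G q k H) (hh : h ∈ H) {s : Finset V}
    (hs : s.card < k) {y : V} (hy : y ∉ s) :
    ∃ h' ∈ H, (∀ v ∈ s, h' v = h v) ∧ h' y ≠ none := by
  classical
  obtain ⟨-, -, -, hres, hext⟩ := hH
  set r : V → Option (Fin q) := fun v => if v ∈ s then h v else none
  have hr : r ∈ H := hres h hh r fun v => by by_cases hv : v ∈ s <;> simp [r, hv]
  have hsupp : {v | r v ≠ none} ⊆ s := fun v hv => by_contra fun hvs => hv (if_neg hvs)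
  have hcard : {v | r v ≠ none}.ncard < k :=
    (Set.ncard_le_ncard hsupp s.finite_toSet).trans_lt (by rwa [Set.ncard_coe_finset])
  obtain ⟨h', hh', hagree, hy'⟩ := hext r hr hcard y (by simp [r, hy])
  refine ⟨h', hh', fun v hv => ?_, hy'⟩
  rw [hagree v (ne_of_mem_of_not_mem hv hy)]
  exact if_pos hv

variable {H : Set (V → Option (Fin 2))} {h : V → Option (Fin 2)}

theorem exists_step_of_adj (hH : IsStrategy G 2 k H) (hk : 2 < k) (hh : h ∈ H) {u x y : V}
    {c d : Fin 2} (hu : h u = some c) (hx : h x = some d) (hxy : G.Adj x y) :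
    ∃ h' ∈ H, h' u = some c ∧ h' y = some (d + 1) := by
  classical
  by_cases hyu : y = u
  · subst hyu
    exact ⟨h, hh, hu, by rw [hu, Fin.two_eq_add_one_of_ne (hH.ne_of_adj hh hxy hx hu)]⟩
  have hy : y ∉ ({u, x} : Finset V) := by
    simp only [Finset.mem_insert, Finset.mem_singleton, not_or]
    exact ⟨hyu, hxy.ne.symm⟩
  obtain ⟨h', hh', hagree, hy'⟩ :=
    hH.exists_extend_of_card_lt hh ((Finset.card_le_two).trans_lt hk) hy
  obtain ⟨b, hb⟩ := Option.ne_none_iff_exists'.mp hy'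
  have hx' : h' x = some d := by rw [hagree x (by simp), hx]
  refine ⟨h', hh', by rw [hagree u (by simp), hu], ?_⟩
  rw [hb, Fin.two_eq_add_one_of_ne (hH.ne_of_adj hh' hxy hx' hb)]

open Fin.NatCast in
theorem exists_alternating_of_walk (hH : IsStrategy G 2 k H) (hk : 2 < k) {N : ℕ}
    {a : ℕ → V} (hadj : ∀ i < N, G.Adj (a i) (a (i + 1))) (hh : h ∈ H) {c : Fin 2}
    (hc : h (a 0) = some c) :
    ∀ i ≤ N, ∃ h' ∈ H, h' (a 0) = some c ∧ h' (a i) = some (c + i) := by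
  intro i hi
  induction i with
  | zero => exact ⟨h, hh, hc, by simpa using hc⟩
  | succ i ih =>
    obtain ⟨h', hh', hc', hi'⟩ := ih (Nat.le_of_succ_le hi)
    obtain ⟨h'', hh'', hc'', hi''⟩ := hH.exists_step_of_adj hk hh' hc' hi' (hadj i hi)
    exact ⟨h'', hh'', hc'', by rw [hi'', Nat.cast_succ, add_assoc]⟩

end IsStrategy

open Fin.NatCast in
theorem no_three_strategy_of_odd_cycle_general {V : Type*}
    (G : SimpleGraph V) (N : ℕ) (hodd : Odd N) (a : ℕ → V)
    (hadj : ∀ i < N, G.Adj (a i) (a (i + 1))) (hclosed : a N = a 0) :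
    ¬ ∃ H : Set (V → Option (Fin 2)), IsStrategy G 2 3 H := by
  rintro ⟨H, hH⟩
  obtain ⟨h₀, hh₀⟩ := hH.1
  obtain ⟨h, hh, -, ha₀⟩ :=
    hH.exists_extend_of_card_lt hh₀ (s := ∅) (by simp) (Finset.notMem_empty (a 0))
  obtain ⟨c, hc⟩ := Option.ne_none_iff_exists'.mp ha₀
  obtain ⟨h', -, hc', hN⟩ := hH.exists_alternating_of_walk (by norm_num) hadj hh hc N le_rfl
  rw [hclosed, hc', Option.some_inj, left_eq_add, Fin.natCast_eq_zero] at hN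
  exact Nat.not_even_iff_odd.mpr hodd (even_iff_two_dvd.mpr hN)

/-- A graph containing a closed walk of odd length (an odd cycle) admits no
3-strategy with respect to `K_2`. -/
theorem no_three_strategy_of_odd_cycle {V : Type*} [Fintype V]
    (G : SimpleGraph V) (N : ℕ) (hodd : Odd N) (a : ℕ → V)
    (hadj : ∀ i < N, G.Adj (a i) (a (i + 1))) (hclosed : a N = a 0) :
    ¬ ∃ H : Set (V → Option (Fin 2)), IsStrategy G 2 3 H :=
  no_three_strategy_of_odd_cycle_general G N hodd a hadj hclosed
end

section
/- Let G be a graph with a k-strategy H with respect to K_3. If v is a vertex with neighborhood N in G, and |N| + 1 ≤ k − 3, then possibly after restricting, the set {h restricted to N : h ∈ H, v ∈ dom(h)} induces a 3-strategy on G restricted to N with respect to K_2 (fixing the color of v), and hence G restricted to N ∪ {v} is 3-colorable provided G restricted to N contains no odd cycle obstruction; in particular, if G → K_3 then the neighborhood of any vertex is 2-colorable. -/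
namespace SimpleGraph

variable {V : Type*} {G : SimpleGraph V}

theorem Coloring.colorable_of_forall_ne {n : ℕ} (C : G.Coloring (Fin (n + 1))) (b : Fin (n + 1))
    (hb : ∀ x, C x ≠ b) : G.Colorable n := by
  let C' : G.Coloring {a : Fin (n + 1) // a ≠ b} :=
    Coloring.mk (fun x => ⟨C x, hb x⟩) fun hxy h => C.valid hxy (congrArg Subtype.val h)
  simpa [Fintype.card_subtype_compl] using C'.colorable

theorem colorable_induce_neighborSet {v : V} {n : ℕ}
    (h : (G.induce (insert v (G.neighborSet v))).Colorable (n + 1)) :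
    (G.induce (G.neighborSet v)).Colorable n := by
  obtain ⟨C⟩ := h
  let C' : (G.induce (G.neighborSet v)).Coloring (Fin (n + 1)) :=
    C.comp (G.induceHomOfLE (Set.subset_insert v _)).toHom
  exact C'.colorable_of_forall_ne (C ⟨v, Set.mem_insert v _⟩) fun x => C.valid (G.adj_symm x.2)

theorem colorable_induce_insert {s : Set V} {n : ℕ} (v : V) (h : (G.induce s).Colorable n) :
    (G.induce (insert v s)).Colorable (n + 1) := by
  classical
  obtain ⟨C⟩ := h
  refine ⟨Coloring.mk
    (fun x => if hx : x.1 ∈ s then (C ⟨x, hx⟩).castSucc else Fin.last n) ?_⟩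
  rintro ⟨x, hx⟩ ⟨y, hy⟩ hxy
  have hadj : G.Adj x y := hxy
  by_cases hxs : x ∈ s <;> by_cases hys : y ∈ s
  · simpa [hxs, hys] using C.valid (show (G.induce s).Adj ⟨x, hxs⟩ ⟨y, hys⟩ from hadj)
  · simp [hxs, hys, Fin.castSucc_ne_last]
  · simp [hxs, hys, (Fin.castSucc_ne_last _).symm]
  · obtain rfl := Set.mem_insert_iff.mp hx |>.resolve_right hxs
    obtain rfl := Set.mem_insert_iff.mp hy |>.resolve_right hys
    exact absurd hadj G.irrefl

def Coloring.partialRestrictions {q : ℕ} (C : G.Coloring (Fin q)) (k : ℕ) :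
    Set (V → Option (Fin q)) :=
  {g | (∀ x, g x = some (C x) ∨ g x = none) ∧ {x | g x ≠ none}.Finite ∧
    {x | g x ≠ none}.ncard ≤ k}

theorem Coloring.isStrategy_partialRestrictions {q : ℕ} (C : G.Coloring (Fin q)) (k : ℕ) :
    IsStrategy G q k (C.partialRestrictions k) := by
  refine ⟨⟨fun _ => none, fun _ => Or.inr rfl, by simp⟩, ?_, fun g hg => hg.2, ?_, ?_⟩
  · rintro g ⟨hg, -⟩ x y hxy a b hx hy
    rcases hg x with hgx | hgx <;> rcases hg y with hgy | hgy <;>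
      simp only [hgx, hgy, Option.some.injEq, reduceCtorEq] at hx hy
    exact hx ▸ hy ▸ C.valid hxy
  · rintro g ⟨hg, hfin, hcard⟩ g' hg'
    have hsupp : {x | g' x ≠ none} ⊆ {x | g x ≠ none} := fun x hx => by
      rcases hg' x with h | h <;> simp_all
    refine ⟨fun x => ?_, hfin.subset hsupp, (Set.ncard_le_ncard hsupp hfin).trans hcard⟩
    rcases hg' x with h | h
    · exact h ▸ hg x
    · exact Or.inr h
  · rintro g ⟨hg, hfin, -⟩ hlt x hx
    classical
    have hsupp :
        {w | Function.update g x (some (C x)) w ≠ none} = insert x {w | g w ≠ none} := by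
      ext w
      rcases eq_or_ne w x with rfl | hwx <;> simp [*]
    refine ⟨Function.update g x (some (C x)), ⟨fun w => ?_, ?_⟩,
      fun w hw => Function.update_of_ne hw _ _, by simp⟩
    · rcases eq_or_ne w x with rfl | hwx
      · simp
      · simpa [Function.update_of_ne hwx] using hg w
    · rw [hsupp, Set.ncard_insert_of_notMem (by simpa using hx) hfin]
      exact ⟨hfin.insert x, hlt⟩

end SimpleGraph

namespace IsStrategy

variable {V : Type*} {G : SimpleGraph V} {q k : ℕ} {H : Set (V → Option (Fin q))}

theorem exists_forall_ne_none (hH : IsStrategy G q k H) (S : Finset V) (hS : S.card ≤ k) :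
    ∃ h ∈ H, ∀ x ∈ S, h x ≠ none := by
  classical
  obtain ⟨⟨h₀, hh₀⟩, -, -, hrestrict, hextend⟩ := hH
  induction S using Finset.induction with
  | empty => exact ⟨h₀, hh₀, by simp⟩
  | @insert x S hxS ih =>
    rw [Finset.card_insert_of_notMem hxS] at hS
    obtain ⟨h, hh, hhS⟩ := ih (by omega)
    -- restricting `h` to `S` keeps its support below `k`, so it can be extended at `x`
    set g : V → Option (Fin q) := fun w => if w ∈ S then h w else none
    have hg : g ∈ H := hrestrict h hh g fun w => by by_cases hw : w ∈ S <;> simp [g, hw]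
    have hsupp : {w | g w ≠ none} ⊆ S := fun w hw =>
      by_contra fun hwS => hw (if_neg hwS)
    have hlt : {w | g w ≠ none}.ncard < k :=
      ((Set.ncard_le_ncard hsupp S.finite_toSet).trans (Set.ncard_coe_finset S).le).trans_lt
        (by omega)
    obtain ⟨g', hg', hagree, hx⟩ := hextend g hg hlt x (by simp [g, hxS])
    refine ⟨g', hg', Finset.forall_mem_insert _ _ _ |>.mpr ⟨hx, fun w hw => ?_⟩⟩
    rw [hagree w (ne_of_mem_of_not_mem hw hxS)]
    simpa [g, hw] using hhS w hw

theorem colorable_induce (hH : IsStrategy G q k H) {s : Set V} (hs : s.Finite)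
    (hk : s.ncard ≤ k) : (G.induce s).Colorable q := by
  obtain ⟨h, hh, hdef⟩ :=
    hH.exists_forall_ne_none hs.toFinset (Set.ncard_eq_toFinset_card s hs ▸ hk)
  have hsome (x : s) : (h x).isSome := Option.isSome_iff_ne_none.mpr (hdef x (by simp))
  let C : (G.induce s).Coloring (Fin q) := SimpleGraph.Coloring.mk (fun x => (h x).get (hsome x))
    fun hxy => hH.2.1 h hh _ _ hxy _ _ (Option.some_get _).symm (Option.some_get _).symm
  simpa using C.colorable

end IsStrategy

/-- If `G` has a `k`-strategy with respect to `K_3` and `v` is a vertex whose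
neighbourhood `N` satisfies `|N| + 1 ≤ k − 3`, then the induced subgraph on
`N` has a 3-strategy with respect to `K_2`; if the induced subgraph on `N` is
2-colorable (no odd cycle obstruction) then `G` restricted to `N ∪ {v}` is
3-colorable; and if `G → K_3` then the neighbourhood of any vertex is
2-colorable. -/
theorem neighborhood_two_colorable {V : Type*} [Fintype V]
    (G : SimpleGraph V) (v : V) (k : ℕ) :
    ((∃ H : Set (V → Option (Fin 3)), IsStrategy G 3 k H) →
      (G.neighborSet v).ncard + 1 ≤ k - 3 →
      ∃ H' : Set (↥(G.neighborSet v) → Option (Fin 2)),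
        IsStrategy (G.induce (G.neighborSet v)) 2 3 H') ∧
    ((G.induce (G.neighborSet v)).Colorable 2 →
      (G.induce (insert v (G.neighborSet v))).Colorable 3) ∧
    (G.Colorable 3 → (G.induce (G.neighborSet v)).Colorable 2) := by
  refine ⟨fun ⟨H, hH⟩ hk => ?_, G.colorable_induce_insert v,
    fun h3 => G.colorable_induce_neighborSet (h3.of_hom (SimpleGraph.Embedding.induce _).toHom)⟩
  have h3 : (G.induce (insert v (G.neighborSet v))).Colorable 3 :=
    hH.colorable_induce ((G.neighborSet v).toFinite.insert v)
      ((Set.ncard_insert_le _ _).trans (by omega))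
  obtain ⟨C⟩ := G.colorable_induce_neighborSet h3
  exact ⟨_, C.isStrategy_partialRestrictions 3⟩
end

section
/- Let I be a structure and S a constraint language over domain S with |S| = p, and let c ≥ 1. Suppose H is the set of all partial maps h from I to S with |dom(h)| ≤ k that are consistent with every substructure of I having at most c edges. Then for each h ∈ H with |dom(h)| < k and each x ∉ dom(h) there exists a ∈ S such that the extension h_a of h by x ↦ a is consistent with every substructure of I having at most c/p edges. -/
/-- A partial map `h : V → Option (Fin p)` is consistent with the substructure
given by a set `F` of `r`-ary constraint tuples (with constraint relation
`RS`) if there is a homomorphism `g` (an assignment satisfying all tuples of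
`F`) that agrees with `h` on `dom(h)` intersected with the elements of `F`. -/
def ConsistentWith {V : Type*} {r p : ℕ} (RS : Set (Fin r → Fin p))
    (F : Finset (Fin r → V)) (h : V → Option (Fin p)) : Prop :=
  ∃ g : V → Fin p, (∀ t ∈ F, (fun i => g (t i)) ∈ RS) ∧
    ∀ v : V, ∀ a : Fin p, h v = some a → (∃ t ∈ F, ∃ i, t i = v) → g v = a

/-- The extension step: if `h` is a partial map with `|dom(h)| < k` that is
consistent with every substructure with at most `c` tuples, and `x ∉ dom(h)`,
then for some value `a` the extension `h_a = h ∪ {x ↦ a}` is consistent with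
every substructure with at most `c/p` tuples.  (Otherwise the union of the
`p` witnessing substructures, having at most `c` tuples, would witness that
`h` itself is inconsistent — a contradiction.) -/
theorem extension_step {V : Type*} [Fintype V] [DecidableEq V] (r p k : ℕ)
    (hp : 1 ≤ p) (edges : Finset (Fin r → V)) (RS : Set (Fin r → Fin p))
    (c : ℝ) (hc : 1 ≤ c) (h : V → Option (Fin p))
    (hdom : {v | h v ≠ none}.ncard < k)
    (hcons : ∀ F ⊆ edges, (F.card : ℝ) ≤ c → ConsistentWith RS F h)
    (x : V) (hx : h x = none) :
    ∃ a : Fin p, ∀ F ⊆ edges, (F.card : ℝ) ≤ c / (p : ℝ) →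
      ConsistentWith RS F (Function.update h x (some a)) := by
  classical
  by_contra hcon
  push_neg at hcon
  choose F hFsub hFcard hFbad using hcon
  have hp0 : (p : ℝ) ≠ 0 := by positivity
  set U : Finset (Fin r → V) := Finset.univ.biUnion F with hU
  have hUsub : U ⊆ edges := Finset.biUnion_subset.mpr fun a _ => hFsub a
  have hUcard : (U.card : ℝ) ≤ c := by
    calc (U.card : ℝ) ≤ ∑ a : Fin p, ((F a).card : ℝ) := by
          exact_mod_cast Finset.card_biUnion_le
      _ ≤ ∑ _a : Fin p, c / p := Finset.sum_le_sum fun a _ => hFcard a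
      _ = p * (c / p) := by simp [mul_comm]
      _ = c := by field_simp
  obtain ⟨g, hg1, hg2⟩ := hcons U hUsub hUcard
  apply hFbad (g x)
  refine ⟨g, fun t ht => hg1 t (Finset.mem_biUnion.mpr ⟨g x, Finset.mem_univ _, ht⟩), ?_⟩
  intro v a hva hvin
  by_cases hvx : v = x
  · subst hvx
    simp [Function.update_self] at hva
    exact hva
  · rw [Function.update_of_ne hvx] at hva
    obtain ⟨t, ht, i, hti⟩ := hvin
    exact hg2 v a hva ⟨t, Finset.mem_biUnion.mpr ⟨g x, Finset.mem_univ _, ht⟩, i, hti⟩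
end
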